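/- arXiv:1811.07452 — 2 statements merged into one kernel-verified Lean document; each statement's English description precedes it below -/
import Mathlib

section
/- Let R be a nonnegative random variable with E[R] > 0 and E[R²] < ∞, and let a, b > 0 be constants. Define g(λ) = E[(R - λa)⁺] and h(λ) = λb. Then there exists a unique λ* > 0 such that g(λ*) = h(λ*). -/
/-!
Since `x ↦ x⁺` is 1-Lipschitz and monotone, `λ ↦ E[(R - λa)⁺]` is continuous and nonincreasing,
so `λ ↦ E[(R - λa)⁺] - λb` is continuous and strictly decreasing. It is positive at `λ = 0`,
because `E[R⁺] ≥ E[R] > 0`, and negative at `λ = E[R⁺]/b + 1`; the intermediate value theorem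
gives the root and strict monotonicity its uniqueness.
-/

open MeasureTheory

theorem Antitone.existsUnique_pos_eq_mul {g : ℝ → ℝ} (hg : Antitone g) (hgc : Continuous g)
    (hg0 : 0 < g 0) {b : ℝ} (hb : 0 < b) : ∃! l : ℝ, 0 < l ∧ g l = l * b := by
  set f : ℝ → ℝ := fun l => g l - l * b
  have hf : StrictAnti f := by
    intro x y hxy
    have := mul_lt_mul_of_pos_right hxy hb
    simp only [f]
    linarith [hg hxy.le]
  set L := g 0 / b + 1
  have hL : 0 < L := by positivity
  have hfL : f L < 0 := by
    have : L * b = g 0 + b := by simp only [L]; field_simp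
    simp only [f]
    linarith [hg hL.le]
  have hf0 : 0 < f 0 := by simpa [f] using hg0
  have hfc : Continuous f := hgc.sub (continuous_mul_const b)
  obtain ⟨l, hl, hfl⟩ := intermediate_value_Icc' hL.le hfc.continuousOn ⟨hfL.le, hf0.le⟩
  have hl0 : 0 < l := hl.1.lt_of_ne (by rintro rfl; exact hf0.ne' hfl)
  refine ⟨l, ⟨hl0, sub_eq_zero.mp hfl⟩, fun y ⟨_, hy⟩ => hf.injective ?_⟩
  rw [hfl]
  exact sub_eq_zero.mpr hy

section

variable {Ω : Type*} [MeasurableSpace Ω] {μ : Measure Ω} {X : Ω → ℝ}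

theorem antitone_integral_max_sub_zero [IsFiniteMeasure μ] (hX : Integrable X μ) :
    Antitone fun c : ℝ => ∫ ω, max (X ω - c) 0 ∂μ := fun c d hcd =>
  integral_mono (hX.sub (integrable_const d)).pos_part (hX.sub (integrable_const c)).pos_part
    fun _ => max_le_max_right 0 (sub_le_sub_left hcd _)

theorem lipschitzWith_integral_max_sub_zero [IsProbabilityMeasure μ] (hX : Integrable X μ) :
    LipschitzWith 1 fun c : ℝ => ∫ ω, max (X ω - c) 0 ∂μ := by
  refine LipschitzWith.of_dist_le_mul fun c d => ?_
  have hint : ∀ c : ℝ, Integrable (fun ω => max (X ω - c) 0) μ := fun c =>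
    (hX.sub (integrable_const c)).pos_part
  rw [dist_eq_norm, ← integral_sub (hint c) (hint d), NNReal.coe_one, one_mul, Real.dist_eq,
    ← mul_one |c - d|, ← probReal_univ (μ := μ)]
  refine norm_integral_le_of_norm_le_const (Filter.Eventually.of_forall fun ω => ?_)
  calc ‖max (X ω - c) 0 - max (X ω - d) 0‖ ≤ |(X ω - c) - (X ω - d)| :=
      abs_max_sub_max_le_abs _ _ _
    _ = |c - d| := by rw [sub_sub_sub_cancel_left, abs_sub_comm]

end

theorem stmt_0_general {Ω : Type*} [MeasurableSpace Ω] (μ : Measure Ω) [IsProbabilityMeasure μ]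
    (R : Ω → ℝ)
    (hRint : Integrable R μ)
    (hmean : 0 < ∫ ω, R ω ∂μ)
    (a b : ℝ) (ha : 0 < a) (hb : 0 < b) :
    ∃! l : ℝ, 0 < l ∧ ∫ ω, max (R ω - l * a) 0 ∂μ = l * b := by
  refine Antitone.existsUnique_pos_eq_mul (g := fun l => ∫ ω, max (R ω - l * a) 0 ∂μ)
    ((antitone_integral_max_sub_zero hRint).comp_monotone (monotone_mul_right_of_nonneg ha.le))
    ((lipschitzWith_integral_max_sub_zero hRint).continuous.comp (continuous_mul_const a))
    ?_ hb
  calc 0 < ∫ ω, R ω ∂μ := hmean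
    _ ≤ ∫ ω, max (R ω - 0 * a) 0 ∂μ :=
      integral_mono hRint ((hRint.sub (integrable_const _)).pos_part) fun ω => by simp

theorem stmt_0 {Ω : Type*} [MeasurableSpace Ω] (μ : Measure Ω) [IsProbabilityMeasure μ]
    (R : Ω → ℝ) (hRmeas : Measurable R) (hR0 : ∀ ω, 0 ≤ R ω)
    (hRint : Integrable R μ) (hR2 : Integrable (fun ω => R ω ^ 2) μ)
    (hmean : 0 < ∫ ω, R ω ∂μ)
    (a b : ℝ) (ha : 0 < a) (hb : 0 < b) :
    ∃! l : ℝ, 0 < l ∧ ∫ ω, max (R ω - l * a) 0 ∂μ = l * b :=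
  stmt_0_general μ R hRint hmean a b ha hb
end

section
/- Let (Rₙ) be i.i.d. nonnegative integrable, ρ ≥ 0 with p = P(R₁ ≥ ρ) > 0, N = min{n : Rₙ ≥ ρ}, and constants η > 0, a > 0. Then the ratio E[R_N] / (η·E[N] + a) equals E[R₁·1_{R₁≥ρ}] / (η + a·p). -/
/-!
On `{N = n + 1} = {X₁, …, Xₙ ∉ S, Xₙ₊₁ ∈ S}` independence gives
`E[g(X_N); N = n + 1] = (1 - p)ⁿ E[g(X₁); X₁ ∈ S]`, and summing the geometric series gives
`E[g(X_N)] = E[g(X₁); X₁ ∈ S] / p`; likewise `E[N] = ∑ₙ P(N > n) = ∑ₙ (1 - p)ⁿ = 1 / p`.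
Working with `ℝ≥0∞`-valued integrals keeps every series unconditional. With
`I = E[R₁; R₁ ≥ ρ]` the ratio then simplifies as `(I / p) / (η / p + a) = I / (η + a p)`.
-/

open MeasureTheory ProbabilityTheory Set
open scoped ENNReal

section

variable {Ω β : Type*}

/-- Takes the junk value `0` when `X n ω ∉ S` for every `n ≥ 1`. -/
noncomputable def firstHit (X : ℕ → Ω → β) (S : Set β) (ω : Ω) : ℕ := sInf {n | 1 ≤ n ∧ X n ω ∈ S}

def missesUpTo (X : ℕ → Ω → β) (S : Set β) (n : ℕ) : Set Ω :=
  ⋂ k ∈ Finset.Icc 1 n, X k ⁻¹' Sᶜ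

section Hitting

variable {X : ℕ → Ω → β} {S : Set β} {ω : Ω} {n : ℕ}

lemma mem_missesUpTo : ω ∈ missesUpTo X S n ↔ ∀ k, 1 ≤ k → k ≤ n → X k ω ∉ S := by
  simp [missesUpTo, and_imp]

lemma mem_missesUpTo_iff_lt_firstHit (h : firstHit X S ω ≠ 0) :
    ω ∈ missesUpTo X S n ↔ n < firstHit X S ω := by
  have hhit := Nat.sInf_mem (Nat.nonempty_of_pos_sInf (Nat.pos_of_ne_zero h))
  rw [mem_missesUpTo]
  constructor
  · intro hmiss
    by_contra! hle
    exact hmiss _ hhit.1 hle hhit.2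
  · intro hlt k hk hkn hkS
    have : firstHit X S ω ≤ k := Nat.sInf_le ⟨hk, hkS⟩
    omega

lemma firstHit_preimage_zero : firstHit X S ⁻¹' {0} = ⋂ n, missesUpTo X S n := by
  ext ω
  simp only [mem_preimage, mem_singleton_iff, mem_iInter, mem_missesUpTo, firstHit,
    Nat.sInf_eq_zero, Set.eq_empty_iff_forall_notMem]
  constructor
  · rintro (⟨h0, -⟩ | hempty) n k hk - hkS
    · omega
    · exact hempty k ⟨hk, hkS⟩
  · exact fun h => Or.inr fun k hk => h k k hk.1 le_rfl hk.2

lemma firstHit_preimage_succ (n : ℕ) :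
    firstHit X S ⁻¹' {n + 1} = missesUpTo X S n ∩ X (n + 1) ⁻¹' S := by
  ext ω
  simp only [mem_preimage, mem_singleton_iff, mem_inter_iff]
  constructor
  · intro h
    refine ⟨(mem_missesUpTo_iff_lt_firstHit (by omega)).2 (by omega), ?_⟩
    have := Nat.sInf_mem (Nat.nonempty_of_sInf_eq_succ h)
    exact h ▸ this.2
  · rintro ⟨hmiss, hhit⟩
    have hmem : n + 1 ∈ {k | 1 ≤ k ∧ X k ω ∈ S} := ⟨by omega, hhit⟩
    have hle : firstHit X S ω ≤ n + 1 := Nat.sInf_le hmem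
    have hpos : 1 ≤ firstHit X S ω := (Nat.sInf_mem ⟨_, hmem⟩).1
    have := (mem_missesUpTo_iff_lt_firstHit (by omega)).1 hmiss
    omega

variable [MeasurableSpace Ω] [MeasurableSpace β]

lemma measurableSet_missesUpTo (hX : ∀ n, Measurable (X n)) (hS : MeasurableSet S) (n : ℕ) :
    MeasurableSet (missesUpTo X S n) :=
  Finset.measurableSet_biInter _ fun k _ => hX k hS.compl

lemma measurable_firstHit (hX : ∀ n, Measurable (X n)) (hS : MeasurableSet S) :
    Measurable (firstHit X S) := by
  refine measurable_to_countable' fun n => ?_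
  cases n with
  | zero =>
    rw [firstHit_preimage_zero]
    exact MeasurableSet.iInter (measurableSet_missesUpTo hX hS)
  | succ n =>
    rw [firstHit_preimage_succ]
    exact (measurableSet_missesUpTo hX hS n).inter (hX (n + 1) hS)

end Hitting

section IID

variable [MeasurableSpace Ω] [mβ : MeasurableSpace β] {μ : Measure Ω} {X : ℕ → Ω → β} {S : Set β}

/-- `missesUpTo X S n` is determined by `X 1, …, X n`, hence independent of `X (n + 1)`. -/
lemma setLIntegral_missesUpTo_comp_succ (hX : ∀ n, Measurable (X n)) (hind : iIndepFun X μ)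
    (hS : MeasurableSet S) {g : β → ℝ≥0∞} (hg : Measurable g) (n : ℕ) :
    ∫⁻ ω in missesUpTo X S n, g (X (n + 1) ω) ∂μ =
      μ (missesUpTo X S n) * ∫⁻ ω, g (X (n + 1) ω) ∂μ := by
  have hindep := indep_iSup_of_disjoint (fun k => (hX k).comap_le) hind.iIndep
    (S := (Finset.Icc 1 n : Set ℕ)) (T := {n + 1}) (by simp)
  have hpast : MeasurableSet[⨆ k ∈ (Finset.Icc 1 n : Set ℕ), mβ.comap (X k)]
      (missesUpTo X S n) :=
    Finset.measurableSet_biInter _ fun k hk =>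
      le_iSup₂ (f := fun k (_ : k ∈ (Finset.Icc 1 n : Set ℕ)) => mβ.comap (X k)) k hk _
        ⟨Sᶜ, hS.compl, rfl⟩
  have hfuture : Measurable[⨆ k ∈ ({n + 1} : Set ℕ), mβ.comap (X k)] fun ω => g (X (n + 1) ω) := by
    rw [iSup_singleton]
    exact hg.comp (comap_measurable _)
  have hmeas := measurableSet_missesUpTo hX hS n
  calc ∫⁻ ω in missesUpTo X S n, g (X (n + 1) ω) ∂μ
      = ∫⁻ ω, (missesUpTo X S n).indicator (fun _ => 1) ω * g (X (n + 1) ω) ∂μ := by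
        rw [← lintegral_indicator hmeas]
        refine lintegral_congr fun ω => ?_
        by_cases hω : ω ∈ missesUpTo X S n <;> simp [hω]
    _ = μ (missesUpTo X S n) * ∫⁻ ω, g (X (n + 1) ω) ∂μ := by
        rw [lintegral_mul_eq_lintegral_mul_lintegral_of_independent_measurableSpace
          (iSup₂_le fun k _ => (hX k).comap_le) (iSup₂_le fun k _ => (hX k).comap_le) hindep
          (measurable_const.indicator hpast) hfuture, lintegral_indicator_const hmeas, one_mul]

lemma measure_missesUpTo (hind : iIndepFun X μ) (hS : MeasurableSet S)
    (hid : ∀ n, IdentDistrib (X n) (X 1) μ μ) (n : ℕ) :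
    μ (missesUpTo X S n) = μ (X 1 ⁻¹' Sᶜ) ^ n := by
  rw [missesUpTo, hind.meas_biInter fun k _ => ⟨Sᶜ, hS.compl, rfl⟩,
    Finset.prod_congr rfl fun k _ => (hid k).measure_mem_eq hS.compl, Finset.prod_const,
    Nat.card_Icc, Nat.add_sub_cancel]

lemma tsum_measure_missesUpTo [IsProbabilityMeasure μ] (hX : ∀ n, Measurable (X n))
    (hind : iIndepFun X μ) (hS : MeasurableSet S) (hid : ∀ n, IdentDistrib (X n) (X 1) μ μ) :
    ∑' n, μ (missesUpTo X S n) = (μ (X 1 ⁻¹' S))⁻¹ := by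
  simp_rw [measure_missesUpTo hind hS hid, ENNReal.tsum_geometric, preimage_compl,
    prob_compl_eq_one_sub (hX 1 hS), ENNReal.sub_sub_cancel ENNReal.one_ne_top prob_le_one]

lemma measure_firstHit_preimage_zero [IsProbabilityMeasure μ] (hX : ∀ n, Measurable (X n))
    (hind : iIndepFun X μ) (hS : MeasurableSet S) (hid : ∀ n, IdentDistrib (X n) (X 1) μ μ)
    (hp : μ (X 1 ⁻¹' S) ≠ 0) :
    μ (firstHit X S ⁻¹' {0}) = 0 := by
  have hsum : ∑' n, μ (missesUpTo X S n) ≠ ∞ := by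
    rw [tsum_measure_missesUpTo hX hind hS hid]
    exact ENNReal.inv_ne_top.2 hp
  rw [firstHit_preimage_zero, ← nonpos_iff_eq_zero]
  exact ge_of_tendsto' (ENNReal.tendsto_atTop_zero_of_tsum_ne_top hsum)
    fun n => measure_mono (iInter_subset _ n)

lemma lintegral_comp_firstHit [IsProbabilityMeasure μ] (hX : ∀ n, Measurable (X n))
    (hind : iIndepFun X μ) (hS : MeasurableSet S) (hid : ∀ n, IdentDistrib (X n) (X 1) μ μ)
    (hp : μ (X 1 ⁻¹' S) ≠ 0) {g : β → ℝ≥0∞} (hg : Measurable g) :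
    ∫⁻ ω, g (X (firstHit X S ω) ω) ∂μ = (μ (X 1 ⁻¹' S))⁻¹ * ∫⁻ ω in X 1 ⁻¹' S, g (X 1 ω) ∂μ := by
  have hN := measurable_firstHit hX hS
  have hfiber : ∀ n, ∫⁻ ω in firstHit X S ⁻¹' {n + 1}, g (X (firstHit X S ω) ω) ∂μ =
      μ (missesUpTo X S n) * ∫⁻ ω in X 1 ⁻¹' S, g (X 1 ω) ∂μ := by
    intro n
    calc ∫⁻ ω in firstHit X S ⁻¹' {n + 1}, g (X (firstHit X S ω) ω) ∂μ
        = ∫⁻ ω in missesUpTo X S n ∩ X (n + 1) ⁻¹' S, g (X (n + 1) ω) ∂μ := by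
          rw [← firstHit_preimage_succ]
          exact setLIntegral_congr_fun (hN (measurableSet_singleton _)) fun ω hω => by
            rw [show firstHit X S ω = n + 1 from hω]
      _ = ∫⁻ ω in missesUpTo X S n, S.indicator g (X (n + 1) ω) ∂μ := by
          rw [inter_comm, ← Measure.restrict_restrict (hX (n + 1) hS),
            ← lintegral_indicator (hX (n + 1) hS)]
          rfl
      _ = μ (missesUpTo X S n) * ∫⁻ ω, S.indicator g (X 1 ω) ∂μ := by
          rw [setLIntegral_missesUpTo_comp_succ hX hind hS (hg.indicator hS)]
          exact congrArg _ ((hid (n + 1)).comp (hg.indicator hS)).lintegral_eq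
      _ = μ (missesUpTo X S n) * ∫⁻ ω in X 1 ⁻¹' S, g (X 1 ω) ∂μ := by
          rw [← lintegral_indicator (hX 1 hS)]
          rfl
  calc ∫⁻ ω, g (X (firstHit X S ω) ω) ∂μ
      = ∑' n, ∫⁻ ω in firstHit X S ⁻¹' {n}, g (X (firstHit X S ω) ω) ∂μ := by
        rw [← lintegral_iUnion (fun n => hN (measurableSet_singleton n))
          (pairwise_disjoint_fiber _), ← preimage_iUnion, iUnion_of_singleton, preimage_univ,
          Measure.restrict_univ]
    _ = ∑' n, μ (missesUpTo X S n) * ∫⁻ ω in X 1 ⁻¹' S, g (X 1 ω) ∂μ := by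
        rw [tsum_eq_zero_add' ENNReal.summable,
          setLIntegral_measure_zero _ _ (measure_firstHit_preimage_zero hX hind hS hid hp),
          zero_add, tsum_congr hfiber]
    _ = (μ (X 1 ⁻¹' S))⁻¹ * ∫⁻ ω in X 1 ⁻¹' S, g (X 1 ω) ∂μ := by
        rw [ENNReal.tsum_mul_right, tsum_measure_missesUpTo hX hind hS hid]

lemma lintegral_firstHit [IsProbabilityMeasure μ] (hX : ∀ n, Measurable (X n))
    (hind : iIndepFun X μ) (hS : MeasurableSet S) (hid : ∀ n, IdentDistrib (X n) (X 1) μ μ)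
    (hp : μ (X 1 ⁻¹' S) ≠ 0) :
    ∫⁻ ω, (firstHit X S ω : ℝ≥0∞) ∂μ = (μ (X 1 ⁻¹' S))⁻¹ := by
  -- tail-sum formula: `N = ∑ₙ 1{n < N}` off the null event `{N = 0}`
  have htail : (fun ω => (firstHit X S ω : ℝ≥0∞)) =ᵐ[μ]
      fun ω => ∑' n, (missesUpTo X S n).indicator 1 ω := by
    filter_upwards [measure_eq_zero_iff_ae_notMem.1
      (measure_firstHit_preimage_zero hX hind hS hid hp)] with ω hω
    classical
    simp_rw [indicator_apply, mem_missesUpTo_iff_lt_firstHit hω, Pi.one_apply]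
    rw [tsum_eq_sum (s := Finset.range _) fun n hn => if_neg (by simpa using hn),
      Finset.sum_ite_of_true fun n hn => Finset.mem_range.1 hn]
    simp
  rw [lintegral_congr_ae htail, lintegral_tsum fun n =>
    (measurable_one.indicator (measurableSet_missesUpTo hX hS n)).aemeasurable]
  simp_rw [lintegral_indicator_one (measurableSet_missesUpTo hX hS _)]
  exact tsum_measure_missesUpTo hX hind hS hid

lemma integral_comp_firstHit [IsProbabilityMeasure μ] (hX : ∀ n, Measurable (X n))
    (hind : iIndepFun X μ) (hS : MeasurableSet S) (hid : ∀ n, IdentDistrib (X n) (X 1) μ μ)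
    (hp : μ (X 1 ⁻¹' S) ≠ 0) {f : β → ℝ} (hf : Measurable f) (hf0 : ∀ n ω, 0 ≤ f (X n ω)) :
    ∫ ω, f (X (firstHit X S ω) ω) ∂μ =
      (μ.real (X 1 ⁻¹' S))⁻¹ * ∫ ω in X 1 ⁻¹' S, f (X 1 ω) ∂μ := by
  have hXN : Measurable fun ω => X (firstHit X S ω) ω :=
    (measurable_from_prod_countable_left (f := fun q : Ω × ℕ => X q.2 q.1) hX).comp
      (measurable_id.prodMk (measurable_firstHit hX hS))
  rw [integral_eq_lintegral_of_nonneg_ae (ae_of_all _ fun ω => hf0 _ ω)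
      (hf.comp hXN).aestronglyMeasurable,
    integral_eq_lintegral_of_nonneg_ae (ae_of_all _ fun ω => hf0 1 ω)
      (hf.comp (hX 1)).aestronglyMeasurable,
    lintegral_comp_firstHit hX hind hS hid hp hf.ennreal_ofReal,
    ENNReal.toReal_mul, ENNReal.toReal_inv, measureReal_def]

lemma integral_firstHit [IsProbabilityMeasure μ] (hX : ∀ n, Measurable (X n))
    (hind : iIndepFun X μ) (hS : MeasurableSet S) (hid : ∀ n, IdentDistrib (X n) (X 1) μ μ)
    (hp : μ (X 1 ⁻¹' S) ≠ 0) :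
    ∫ ω, (firstHit X S ω : ℝ) ∂μ = (μ.real (X 1 ⁻¹' S))⁻¹ := by
  rw [integral_eq_lintegral_of_nonneg_ae (ae_of_all _ fun ω => Nat.cast_nonneg _)
      (measurable_from_top.comp (measurable_firstHit hX hS)).aestronglyMeasurable]
  simp_rw [ENNReal.ofReal_natCast]
  rw [lintegral_firstHit hX hind hS hid hp, ENNReal.toReal_inv, measureReal_def]

end IID

end

theorem stmt_14_general {Ω : Type*} [MeasurableSpace Ω] (μ : Measure Ω) [IsProbabilityMeasure μ]
    (R : ℕ → Ω → ℝ) (hmeas : ∀ i, Measurable (R i))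
    (hR0 : ∀ i ω, 0 ≤ R i ω)
    (hindep : ProbabilityTheory.iIndepFun R μ)
    (hid : ∀ i j, ProbabilityTheory.IdentDistrib (R i) (R j) μ μ)
    (ρ : ℝ) (hp : 0 < (μ {ω | ρ ≤ R 1 ω}).toReal)
    (η a : ℝ)
    (N : Ω → ℕ) (hN : ∀ ω, N ω = sInf {n | 1 ≤ n ∧ ρ ≤ R n ω}) :
    (∫ ω, R (N ω) ω ∂μ) / (η * ∫ ω, (N ω : ℝ) ∂μ + a) =
      (∫ ω in {ω | ρ ≤ R 1 ω}, R 1 ω ∂μ) /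
        (η + a * (μ {ω | ρ ≤ R 1 ω}).toReal) := by
  obtain rfl : N = firstHit R (Ici ρ) := funext hN
  set p := (μ {ω | ρ ≤ R 1 ω}).toReal
  have hp0 : μ (R 1 ⁻¹' Ici ρ) ≠ 0 := (ENNReal.toReal_pos_iff.1 hp).1.ne'
  have hnum : ∫ ω, R (firstHit R (Ici ρ) ω) ω ∂μ = p⁻¹ * ∫ ω in {ω | ρ ≤ R 1 ω}, R 1 ω ∂μ :=
    integral_comp_firstHit hmeas hindep measurableSet_Ici (fun n => hid n 1) hp0 measurable_id hR0
  have hden : ∫ ω, (firstHit R (Ici ρ) ω : ℝ) ∂μ = p⁻¹ :=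
    integral_firstHit hmeas hindep measurableSet_Ici (fun n => hid n 1) hp0
  rw [hnum, hden, show η * p⁻¹ + a = p⁻¹ * (η + a * p) by field_simp,
    mul_div_mul_left _ _ (inv_ne_zero hp.ne')]

theorem stmt_14 {Ω : Type*} [MeasurableSpace Ω] (μ : Measure Ω) [IsProbabilityMeasure μ]
    (R : ℕ → Ω → ℝ) (hmeas : ∀ i, Measurable (R i))
    (hR0 : ∀ i ω, 0 ≤ R i ω) (hint : ∀ i, Integrable (R i) μ)
    (hindep : ProbabilityTheory.iIndepFun R μ)
    (hid : ∀ i j, ProbabilityTheory.IdentDistrib (R i) (R j) μ μ)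
    (ρ : ℝ) (hρ : 0 ≤ ρ) (hp : 0 < (μ {ω | ρ ≤ R 1 ω}).toReal)
    (η a : ℝ) (hη : 0 < η) (ha : 0 < a)
    (N : Ω → ℕ) (hN : ∀ ω, N ω = sInf {n | 1 ≤ n ∧ ρ ≤ R n ω}) :
    (∫ ω, R (N ω) ω ∂μ) / (η * ∫ ω, (N ω : ℝ) ∂μ + a) =
      (∫ ω in {ω | ρ ≤ R 1 ω}, R 1 ω ∂μ) /
        (η + a * (μ {ω | ρ ≤ R 1 ω}).toReal) :=
  stmt_14_general μ R hmeas hR0 hindep hid ρ hp η a N hN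
end
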